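/- arXiv:1203.1373 — 3 statements merged into one kernel-verified Lean document; each statement's English description precedes it below -/
import Mathlib

section
/- In the commutative ring R = ℚ[H, ξ]/(H⁶, ξ⁵⁰ − 12Hξ⁴⁹ + 84H²ξ⁴⁸ − 448H³ξ⁴⁷ + 2016H⁴ξ⁴⁶ − 8064H⁵ξ⁴⁵), one has the identity ξ⁵⁴ = 192·H⁵·ξ⁴⁹. -/
open MvPolynomial

noncomputable section

/-- The Chow ring `R = ℚ[H,ξ]/(H⁶, ξ⁵⁰ − 12Hξ⁴⁹ + 84H²ξ⁴⁸ − 448H³ξ⁴⁷ + 2016H⁴ξ⁴⁶ − 8064H⁵ξ⁴⁵)`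
of `ℙ(K)`, where `H = X 0` and `ξ = X 1`. -/
abbrev ChowPK : Type :=
  MvPolynomial (Fin 2) ℚ ⧸
    Ideal.span {(MvPolynomial.X 0 : MvPolynomial (Fin 2) ℚ) ^ 6,
      (MvPolynomial.X 1 : MvPolynomial (Fin 2) ℚ) ^ 50 -
        12 * MvPolynomial.X 0 * MvPolynomial.X 1 ^ 49 +
        84 * MvPolynomial.X 0 ^ 2 * MvPolynomial.X 1 ^ 48 -
        448 * MvPolynomial.X 0 ^ 3 * MvPolynomial.X 1 ^ 47 +
        2016 * MvPolynomial.X 0 ^ 4 * MvPolynomial.X 1 ^ 46 -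
        8064 * MvPolynomial.X 0 ^ 5 * MvPolynomial.X 1 ^ 45}

/-- The class of `H` in `ChowPK`. -/
def Hc : ChowPK := Ideal.Quotient.mk _ (MvPolynomial.X 0)

/-- The class of `ξ` in `ChowPK`. -/
def xic : ChowPK := Ideal.Quotient.mk _ (MvPolynomial.X 1)

/-- In `R = ℚ[H,ξ]/(H⁶, ξ⁵⁰ − 12Hξ⁴⁹ + 84H²ξ⁴⁸ − 448H³ξ⁴⁷ + 2016H⁴ξ⁴⁶ − 8064H⁵ξ⁴⁵)` one has
`ξ⁵⁴ = 192 H⁵ ξ⁴⁹`: the degree of `C₆` equals 192. -/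
theorem xi_pow_54_eq_192 : xic ^ 54 = 192 * Hc ^ 5 * xic ^ 49 := by
  unfold Hc xic
  rw [← map_pow, ← map_pow, ← map_pow, show ((192 : ChowPK)) = Ideal.Quotient.mk _
    (192 : MvPolynomial (Fin 2) ℚ) from rfl, ← map_mul, ← map_mul, Ideal.Quotient.eq]
  set H : MvPolynomial (Fin 2) ℚ := MvPolynomial.X 0
  set x : MvPolynomial (Fin 2) ℚ := MvPolynomial.X 1
  have h : x ^ 54 - 192 * H ^ 5 * x ^ 49 =
      (27328 * x ^ 48 + 268800 * H * x ^ 47 + 806400 * H ^ 2 * x ^ 46 +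
        1935360 * H ^ 3 * x ^ 45) * (H ^ 6) +
      (x ^ 4 + 12 * H * x ^ 3 + 60 * H ^ 2 * x ^ 2 + 160 * H ^ 3 * x + 240 * H ^ 4) *
        (x ^ 50 - 12 * H * x ^ 49 + 84 * H ^ 2 * x ^ 48 - 448 * H ^ 3 * x ^ 47 +
          2016 * H ^ 4 * x ^ 46 - 8064 * H ^ 5 * x ^ 45) := by ring
  rw [h]
  exact Ideal.add_mem _
    (Ideal.mul_mem_left _ _ (Ideal.subset_span (Set.mem_insert _ _)))
    (Ideal.mul_mem_left _ _ (Ideal.subset_span (Set.mem_insert_of_mem _ rfl)))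
end
end

section
/- In the polynomial ring ℚ[x₁, x₂, x₃], let h_j denote the complete homogeneous symmetric polynomial of degree j in x₁, x₂, x₃, and let P₉ be the degree-9 homogeneous component of the polynomial (1 + x₁ + x₂ + x₃) · (1+3x₁)(1+3x₂)(1+3x₃) · ∏_{i≠j} (1 + 2x_i + x_j), where the last product runs over the six ordered pairs (i,j) with i ≠ j, i,j ∈ {1,2,3}. Then P₉ − 3402·(x₁x₂x₃)³ lies in the ideal of ℚ[x₁, x₂, x₃] generated by h₄, h₅, h₆. -/
/-!
The ten factors of `Qprod` are `1 + ℓ`, where `ℓ = a₁x₁ + a₂x₂ + a₃x₃` runs over the exponent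
vectors of the cubic monomials (the Chern roots of `Sym³S*`). As each `ℓ` is linear, the
degree-9 part of the product is `e₉(ℓ) = ∑ᵢ ∏_{j ≠ i} ℓⱼ`, a symmetric polynomial which we write
in `e₁, e₂, e₃`; an explicit combination of `h₄, h₅, h₆` then accounts for `P₉ − 3402 e₃³`.
-/

open Finset MvPolynomial

noncomputable section

/-- The complete homogeneous symmetric polynomial of degree `j` in `x₁, x₂, x₃`. -/
def hsym (j : ℕ) : MvPolynomial (Fin 3) ℚ :=
  ∑ a ∈ Finset.range (j + 1), ∑ b ∈ Finset.range (j + 1 - a),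
    X 0 ^ a * X 1 ^ b * X 2 ^ (j - a - b)

/-- The product `(1 + x₁ + x₂ + x₃)·(1+3x₁)(1+3x₂)(1+3x₃)·∏_{i≠j}(1 + 2x_i + x_j)`,
the total Chern class of `Sym³S*` times the relevant factors. -/
def Qprod : MvPolynomial (Fin 3) ℚ :=
  (1 + X 0 + X 1 + X 2) * ((1 + 3 * X 0) * (1 + 3 * X 1) * (1 + 3 * X 2)) *
    ∏ p ∈ Finset.univ.filter (fun p : Fin 3 × Fin 3 => p.1 ≠ p.2),
      (1 + 2 * X p.1 + X p.2)

/-- The degree-9 homogeneous component of `Qprod`. -/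
def P9 : MvPolynomial (Fin 3) ℚ := MvPolynomial.homogeneousComponent 9 Qprod

theorem Finset.image_erase_eq_powersetCard_card_sub_one {α : Type*} [DecidableEq α]
    {s : Finset α} (hs : s.Nonempty) : s.image s.erase = s.powersetCard (#s - 1) := by
  ext t
  simp only [mem_image, mem_powersetCard]
  constructor
  · rintro ⟨i, hi, rfl⟩
    exact ⟨erase_subset i s, card_erase_of_mem hi⟩
  · rintro ⟨hts, hcard⟩
    have hpos := hs.card_pos
    obtain ⟨i, hi⟩ := card_eq_one.mp (show #(s \ t) = 1 by rw [card_sdiff_of_subset hts]; omega)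
    refine ⟨i, (mem_sdiff.mp (hi ▸ mem_singleton_self i)).1, ?_⟩
    rw [← sdiff_singleton_eq_erase, ← hi, sdiff_sdiff_eq_self hts]

theorem Finset.sum_powersetCard_card_sub_one {α M : Type*} [DecidableEq α] [AddCommMonoid M]
    {s : Finset α} (hs : s.Nonempty) (f : Finset α → M) :
    ∑ t ∈ s.powersetCard (#s - 1), f t = ∑ i ∈ s, f (s.erase i) := by
  rw [← image_erase_eq_powersetCard_card_sub_one hs, sum_image s.erase_injOn]

namespace MvPolynomial

variable {σ ι R : Type*} [CommSemiring R]

theorem homogeneousComponent_prod_one_add {s : Finset ι} {ℓ : ι → MvPolynomial σ R}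
    (hℓ : ∀ i ∈ s, (ℓ i).IsHomogeneous 1) (k : ℕ) :
    homogeneousComponent k (∏ i ∈ s, (1 + ℓ i)) = ∑ t ∈ s.powersetCard k, ∏ i ∈ t, ℓ i := by
  classical
  have hterm : ∀ t ∈ s.powerset, (∏ i ∈ t, ℓ i).IsHomogeneous #t := fun t ht => by
    simpa using IsHomogeneous.prod t ℓ (fun _ => 1) fun i hi => hℓ i (mem_powerset.mp ht hi)
  rw [prod_one_add, map_sum, powersetCard_eq_filter, sum_filter]
  refine sum_congr rfl fun t ht => ?_
  rw [homogeneousComponent_of_mem (hterm t ht)]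
  simp only [eq_comm]

theorem homogeneousComponent_card_sub_one_prod_one_add [DecidableEq ι] {s : Finset ι}
    (hs : s.Nonempty) {ℓ : ι → MvPolynomial σ R} (hℓ : ∀ i ∈ s, (ℓ i).IsHomogeneous 1) :
    homogeneousComponent (#s - 1) (∏ i ∈ s, (1 + ℓ i)) = ∑ i ∈ s, ∏ j ∈ s.erase i, ℓ j := by
  rw [homogeneousComponent_prod_one_add hℓ, sum_powersetCard_card_sub_one hs]

end MvPolynomial

def sym3Weight : Fin 10 → Fin 3 → ℕ :=
  ![![3, 0, 0], ![0, 3, 0], ![0, 0, 3], ![2, 1, 0], ![2, 0, 1],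
    ![1, 2, 0], ![0, 2, 1], ![1, 0, 2], ![0, 1, 2], ![1, 1, 1]]

def sym3Root (i : Fin 10) : MvPolynomial (Fin 3) ℚ := ∑ k, C (sym3Weight i k : ℚ) * X k

theorem isHomogeneous_sym3Root (i : Fin 10) : (sym3Root i).IsHomogeneous 1 :=
  IsHomogeneous.sum _ _ _ fun k _ => isHomogeneous_C_mul_X _ k

theorem Qprod_eq_prod_sym3Root : Qprod = ∏ i, (1 + sym3Root i) := by
  simp only [Qprod, prod_filter, Fintype.prod_prod_type, Fin.prod_univ_succ, Fin.isValue,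
    Fin.reduceSucc, ne_eq, Fin.reduceEq, not_true_eq_false, not_false_eq_true, ite_true, ite_false,
    sym3Root, sym3Weight, Matrix.cons_val, map_natCast, Fin.sum_univ_succ]
  ring

theorem P9_eq_sum_prod_erase : P9 = ∑ i, ∏ j ∈ univ.erase i, sym3Root j := by
  rw [P9, Qprod_eq_prod_sym3Root]
  have h := homogeneousComponent_card_sub_one_prod_one_add univ_nonempty
    fun i (_ : i ∈ univ) => isHomogeneous_sym3Root i
  rwa [card_fin] at h

local notation "e₁" => (X 0 + X 1 + X 2 : MvPolynomial (Fin 3) ℚ)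
local notation "e₂" => (X 0 * X 1 + X 0 * X 2 + X 1 * X 2 : MvPolynomial (Fin 3) ℚ)
local notation "e₃" => (X 0 * X 1 * X 2 : MvPolynomial (Fin 3) ℚ)

theorem P9_eq_poly_esymm :
    P9 = 360 * e₁ ^ 4 * e₂ * e₃ + 72 * e₁ ^ 3 * e₂ ^ 3 + 108 * e₁ ^ 3 * e₃ ^ 2
      + 540 * e₁ ^ 2 * e₂ ^ 2 * e₃ + 36 * e₁ * e₂ ^ 4 - 243 * e₁ * e₂ * e₃ ^ 2
      + 108 * e₂ ^ 3 * e₃ + 729 * e₃ ^ 3 := by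
  rw [P9_eq_sum_prod_erase]
  simp only [← filter_ne', prod_filter, Fin.sum_univ_succ, Fin.prod_univ_succ, Fin.isValue,
    Fin.reduceSucc, ne_eq, Fin.reduceEq, not_true_eq_false, not_false_eq_true, ite_true, ite_false,
    sym3Root, sym3Weight, Matrix.cons_val, map_natCast]
  ring

-- The cofactors come from reducing `P₉ − 3402 e₃³` modulo `(h₄, h₅, h₆)` by computer algebra.
theorem P9_sub_point_class_eq_combination_hsym :
    P9 - 3402 * e₃ ^ 3 =
      (-1836 * e₁ ^ 5 + 9360 * e₁ ^ 3 * e₂ - 11961 * e₁ ^ 2 * e₃ - 2799 * e₁ * e₂ ^ 2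
          + 1323 * e₂ * e₃) * hsym 4
        + (-8685 * e₁ ^ 2 * e₂ + 10962 * e₁ * e₃ + 1944 * e₂ ^ 2) * hsym 5
        + (1836 * e₁ ^ 3 + 2997 * e₁ * e₂ - 2673 * e₃) * hsym 6 := by
  rw [P9_eq_poly_esymm]
  simp only [hsym, sum_range_succ, range_zero, sum_empty, Nat.reduceAdd, Nat.reduceSub]
  ring

/-- `P₉ − 3402·(x₁x₂x₃)³` lies in the ideal generated by `h₄, h₅, h₆`:
the degree of the divisor `C₈` of cubic fourfolds containing a plane is 3402. -/
theorem P9_sub_point_class_mem_ideal :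
    P9 - 3402 * (X 0 * X 1 * X 2) ^ 3 ∈ Ideal.span {hsym 4, hsym 5, hsym 6} := by
  rw [P9_sub_point_class_eq_combination_hsym]
  exact Submodule.mem_span_triple.mpr ⟨_, _, _, rfl⟩
end
end

section
/- The subgroup Γ⁰(3) = {(a b; c d) ∈ SL₂(ℤ) : b ≡ 0 (mod 3)} of SL₂(ℤ) is generated by the two matrices (1 0; −1 1) and (2 3; −1 −1). -/
open Matrix

noncomputable section

/-- The matrix `(1 0; −1 1)` as an element of `SL₂(ℤ)`. -/
def g₁ : Matrix.SpecialLinearGroup (Fin 2) ℤ :=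
  ⟨!![1, 0; -1, 1], by norm_num [Matrix.det_fin_two_of]⟩

/-- The matrix `(2 3; −1 −1)` as an element of `SL₂(ℤ)`. -/
def g₂ : Matrix.SpecialLinearGroup (Fin 2) ℤ :=
  ⟨!![2, 3; -1, -1], by norm_num [Matrix.det_fin_two_of]⟩

/-!
Euclidean descent on the upper-left entry `a` of `A = (a b; c d)`. Left multiplication by
`g₁ ^ n` replaces `c` by `c - n a`, so one may assume `2 |c| ≤ |a|`; left multiplication by
`(T ^ N) ^ m` replaces `a` by `a + N m c`, so then `2 |a| ≤ N |c|`, and `|a|` drops to at most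
`N/4` of its value, a strict decrease as long as `N ≤ 3`. In `Γ⁰(N)` with `N ≠ 1` the determinant
forbids `a = 0`, so the descent stops at `c = 0`, where `A = ± T ^ b`. For `N = 3` the relations
`g₂ ^ 3 = -1` and `g₂ * g₁ = -T ^ (-3)` put `-1` and `T ^ 3` in the group generated by `g₁, g₂`.
-/

open MatrixGroups ModularGroup

lemma Int.exists_two_mul_abs_sub_mul_le (x : ℤ) {y : ℤ} (hy : y ≠ 0) :
    ∃ n : ℤ, 2 * |x - n * y| ≤ |y| := by
  have hpos : 0 < y.natAbs := Int.natAbs_pos.mpr hy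
  obtain ⟨k, hk⟩ := Int.natAbs_dvd.mp (Int.dvd_bmod_sub_self (x := x) (m := y.natAbs))
  have hlo := Int.le_bmod (x := x) hpos
  have hhi := Int.bmod_le (x := x) hpos
  rw [Int.natCast_natAbs] at hlo hhi
  refine ⟨-k, ?_⟩
  rw [show x - -k * y = x.bmod y.natAbs by linarith]
  cases abs_cases (x.bmod y.natAbs) <;> omega

lemma g₁_eq_conj_T : g₁ = S * T * S⁻¹ := by
  ext i j; fin_cases i <;> fin_cases j <;> rfl

lemma coe_g₁_zpow (n : ℤ) : ↑(g₁ ^ n) = !![1, 0; -n, 1] := by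
  rw [g₁_eq_conj_T, conj_zpow]
  simp [S_inv, coe_T_zpow]

lemma g₁_zpow_mul_apply_zero_zero (n : ℤ) (A : SL(2, ℤ)) : (g₁ ^ n * A) 0 0 = A 0 0 := by
  simp [coe_g₁_zpow, mul_apply, Fin.sum_univ_two]

lemma g₁_zpow_mul_apply_one_zero (n : ℤ) (A : SL(2, ℤ)) :
    (g₁ ^ n * A) 1 0 = A 1 0 - n * A 0 0 := by
  simp [coe_g₁_zpow, mul_apply, Fin.sum_univ_two]; ring

lemma T_zpow_mul_apply_zero_zero (n : ℤ) (A : SL(2, ℤ)) :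
    (T ^ n * A) 0 0 = A 0 0 + n * A 1 0 := by
  simp [coe_T_zpow, mul_apply, Fin.sum_univ_two]

lemma eq_T_zpow_or_eq_neg_T_zpow (A : SL(2, ℤ)) (hc : A 1 0 = 0) :
    A = T ^ A 0 1 ∨ A = -T ^ (-A 0 1) := by
  have had := A.det_coe
  rw [det_fin_two, hc, mul_zero, sub_zero] at had
  rcases Int.eq_one_or_neg_one_of_mul_eq_one' had with ⟨ha, hd⟩ | ⟨ha, hd⟩
  · left; ext i j; fin_cases i <;> fin_cases j <;> simp [ha, hc, hd, coe_T_zpow]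
  · right; ext i j; fin_cases i <;> fin_cases j <;> simp [ha, hc, hd, coe_T_zpow]

/-- `Γ⁰(N)`: the transpose of `CongruenceSubgroup.Gamma0 N`. -/
def gammaUpper (N : ℕ) : Subgroup SL(2, ℤ) where
  carrier := {A | (N : ℤ) ∣ A 0 1}
  one_mem' := by simp
  mul_mem' {A B} hA hB := by
    change _ ∣ (A * B : Matrix (Fin 2) (Fin 2) ℤ) 0 1
    rw [(two_mul_expl A.1 B.1).2.1]
    exact dvd_add (hB.mul_left _) (hA.mul_right _)
  inv_mem' {A} hA := by
    change _ ∣ (A⁻¹ : SL(2, ℤ)) 0 1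
    simpa [SpecialLinearGroup.SL2_inv_expl A] using hA

lemma mem_gammaUpper {N : ℕ} {A : SL(2, ℤ)} : A ∈ gammaUpper N ↔ (N : ℤ) ∣ A 0 1 := Iff.rfl

lemma g₁_mem_gammaUpper (N : ℕ) : g₁ ∈ gammaUpper N := by
  rw [mem_gammaUpper]; simp [g₁]

lemma T_pow_mem_gammaUpper (N : ℕ) : T ^ N ∈ gammaUpper N := by
  simp [mem_gammaUpper, ← zpow_natCast, coe_T_zpow]

lemma apply_zero_zero_ne_zero_of_mem_gammaUpper {N : ℕ} (hN : N ≠ 1) {A : SL(2, ℤ)}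
    (hA : A ∈ gammaUpper N) : A 0 0 ≠ 0 := by
  intro ha
  have hbc : A 0 1 * -A 1 0 = 1 := by
    have := A.det_coe; rw [det_fin_two, ha] at this; linarith
  have := Int.eq_one_of_dvd_one (Int.natCast_nonneg N) (hbc ▸ hA.mul_right _)
  exact hN (by exact_mod_cast this)

lemma exists_g₁_zpow_mul_two_mul_abs_apply_one_zero_le (A : SL(2, ℤ)) (ha : A 0 0 ≠ 0) :
    ∃ n : ℤ, 2 * |(g₁ ^ n * A) 1 0| ≤ |(g₁ ^ n * A) 0 0| := by
  obtain ⟨n, hn⟩ := Int.exists_two_mul_abs_sub_mul_le (A 1 0) ha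
  exact ⟨n, by rwa [g₁_zpow_mul_apply_one_zero, g₁_zpow_mul_apply_zero_zero]⟩

lemma exists_T_pow_zpow_mul_abs_apply_zero_zero_lt {N : ℕ} (hN₀ : N ≠ 0) (hN₃ : N ≤ 3)
    (A : SL(2, ℤ)) (hc : A 1 0 ≠ 0) (hca : 2 * |A 1 0| ≤ |A 0 0|) :
    ∃ m : ℤ, |((T ^ N) ^ m * A) 0 0| < |A 0 0| := by
  have hNc : (N : ℤ) * A 1 0 ≠ 0 := mul_ne_zero (by exact_mod_cast hN₀) hc
  obtain ⟨m, hm⟩ := Int.exists_two_mul_abs_sub_mul_le (A 0 0) hNc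
  refine ⟨-m, ?_⟩
  rw [← zpow_natCast, ← _root_.zpow_mul, T_zpow_mul_apply_zero_zero]
  rw [abs_mul, Nat.abs_cast] at hm
  have hN : (N : ℤ) ≤ 3 := by exact_mod_cast hN₃
  have hc' : 0 < |A 1 0| := abs_pos.mpr hc
  calc |A 0 0 + (N * -m) * A 1 0| = |A 0 0 - m * (N * A 1 0)| := by ring_nf
    _ < |A 0 0| := by nlinarith

lemma mem_of_mem_gammaUpper_of_apply_one_zero_eq_zero {N : ℕ} {H : Subgroup SL(2, ℤ)}
    (hT : T ^ N ∈ H) (hneg : -1 ∈ H) {A : SL(2, ℤ)} (hA : A ∈ gammaUpper N) (hc : A 1 0 = 0) :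
    A ∈ H := by
  obtain ⟨k, hk⟩ := mem_gammaUpper.mp hA
  have hTk (l : ℤ) : T ^ ((N : ℤ) * l) ∈ H := by
    rw [_root_.zpow_mul, zpow_natCast]; exact zpow_mem hT l
  rcases eq_T_zpow_or_eq_neg_T_zpow A hc with hA | hA
  · rw [hA, hk]; exact hTk k
  · rw [hA, hk, ← neg_one_mul, ← mul_neg]; exact mul_mem hneg (hTk (-k))

theorem gammaUpper_le {N : ℕ} (hN₂ : 2 ≤ N) (hN₃ : N ≤ 3) {H : Subgroup SL(2, ℤ)}
    (hg₁ : g₁ ∈ H) (hT : T ^ N ∈ H) (hneg : -1 ∈ H) : gammaUpper N ≤ H := by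
  intro A hA
  induction hk : (A 0 0).natAbs using Nat.strong_induction_on generalizing A with
  | _ k ih =>
  obtain ⟨n, hn⟩ := exists_g₁_zpow_mul_two_mul_abs_apply_one_zero_le A
    (apply_zero_zero_ne_zero_of_mem_gammaUpper (by omega) hA)
  set B := g₁ ^ n * A
  suffices hB : B ∈ H by simpa [B] using mul_mem (zpow_mem hg₁ (-n)) hB
  have hBΓ : B ∈ gammaUpper N := mul_mem (zpow_mem (g₁_mem_gammaUpper N) n) hA
  by_cases hc : B 1 0 = 0
  · exact mem_of_mem_gammaUpper_of_apply_one_zero_eq_zero hT hneg hBΓ hc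
  obtain ⟨m, hm⟩ := exists_T_pow_zpow_mul_abs_apply_zero_zero_lt (by omega) hN₃ B hc hn
  set C := (T ^ N) ^ m * B
  suffices hC : C ∈ H by simpa [C] using mul_mem (zpow_mem hT (-m)) hC
  refine ih (C 0 0).natAbs ?_ (mul_mem (zpow_mem (T_pow_mem_gammaUpper N) m) hBΓ) rfl
  rw [← hk, ← g₁_zpow_mul_apply_zero_zero n A]
  exact Int.natAbs_lt_iff_sq_lt.mpr (sq_lt_sq.mpr hm)

lemma g₂_pow_three : g₂ ^ 3 = -1 := by
  ext i j; fin_cases i <;> fin_cases j <;> rfl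

lemma T_pow_three_eq : T ^ 3 = g₂ ^ 3 * (g₂ * g₁)⁻¹ := by
  ext i j; fin_cases i <;> fin_cases j <;> rfl

/-- The subgroup `Γ⁰(3) = {(a b; c d) ∈ SL₂(ℤ) : b ≡ 0 (mod 3)}` is generated by
`(1 0; −1 1)` and `(2 3; −1 −1)`. -/
theorem Gamma_upper_three_generated :
    (Subgroup.closure ({g₁, g₂} : Set (Matrix.SpecialLinearGroup (Fin 2) ℤ)) : Set (Matrix.SpecialLinearGroup (Fin 2) ℤ)) =
      {A : Matrix.SpecialLinearGroup (Fin 2) ℤ | (3 : ℤ) ∣ (A : Matrix (Fin 2) (Fin 2) ℤ) 0 1} := by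
  set H := Subgroup.closure ({g₁, g₂} : Set SL(2, ℤ))
  have hg₁ : g₁ ∈ H := Subgroup.subset_closure (by simp)
  have hg₂ : g₂ ∈ H := Subgroup.subset_closure (by simp)
  have hneg : -1 ∈ H := g₂_pow_three ▸ pow_mem hg₂ 3
  have hT : T ^ 3 ∈ H := T_pow_three_eq ▸ mul_mem (pow_mem hg₂ 3) (inv_mem (mul_mem hg₂ hg₁))
  have hle : H ≤ gammaUpper 3 := by
    rw [Subgroup.closure_le, Set.insert_subset_iff, Set.singleton_subset_iff]
    exact ⟨g₁_mem_gammaUpper 3, mem_gammaUpper.mpr (by decide)⟩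
  rw [le_antisymm hle (gammaUpper_le (N := 3) (by norm_num) le_rfl hg₁ hT hneg)]
  rfl
end
end
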